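/- Let φ be a real-valued Schwartz function on ℝ whose Fourier transform φ̂ vanishes outside [−1/2, 1/2], let n ≥ 1, and define f̃_n(x₁,x₂) = φ(x₁) sin(2ⁿ x₁) φ(x₂). Then the (2D) Fourier transform of f̃_n is supported in the annulus C_n = { ξ ∈ ℝ² : 2ⁿ − 1 ≤ |ξ| ≤ 2ⁿ + 1 }. -/

import Mathlib

noncomputable section

open MeasureTheory Filter Topology
open scoped Real RealInnerProductSpace BigOperators

/-- The plane `ℝ²` with its Euclidean structure. -/
abbrev E2 : Type := EuclideanSpace ℝ (Fin 2)

/-- Fourier transform on `ℝ²` with the convention `f̂(ξ) = ∫ e^{-i x·ξ} f(x) dx`. -/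
def ft2 (f : E2 → ℂ) (ξ : E2) : ℂ :=
  ∫ x : E2, Complex.exp (-Complex.I * (⟪x, ξ⟫ : ℂ)) * f x

/-- Squared `H^s` norm of a scalar function on `ℝ²`:
`‖f‖²_{H^s} = ∫ (1+|ξ|²)^s |f̂(ξ)|² dξ`. -/
def hsNormSq (s : ℝ) (f : E2 → ℝ) : ℝ :=
  ∫ ξ : E2, (1 + ‖ξ‖ ^ 2) ^ s * ‖ft2 (fun x => (f x : ℂ)) ξ‖ ^ 2

/-- The `H^s` norm. -/
def hsNorm (s : ℝ) (f : E2 → ℝ) : ℝ := Real.sqrt (hsNormSq s f)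

/-- Membership in `H^s(ℝ²)` (in a form making the above norm meaningful). -/
def MemHs (s : ℝ) (f : E2 → ℝ) : Prop :=
  Integrable (fun x => (f x : ℂ)) ∧
  Integrable (fun ξ : E2 =>
    (1 + ‖ξ‖ ^ 2) ^ s * ‖ft2 (fun x => (f x : ℂ)) ξ‖ ^ 2)

/-- `H^s` norm of a vector field: the sum of the norms of the components. -/
def hsNormVec (s : ℝ) (u : E2 → E2) : ℝ := ∑ i : Fin 2, hsNorm s fun x => u x i

/-- A vector field belongs to `H^s` iff each of its components does. -/
def MemHsVec (s : ℝ) (u : E2 → E2) : Prop := ∀ i : Fin 2, MemHs s fun x => u x i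

/-- Partial derivative `∂ᵢ` of a scalar function on `ℝ²`. -/
def pd (i : Fin 2) (f : E2 → ℝ) (x : E2) : ℝ := fderiv ℝ f x (EuclideanSpace.single i 1)

/-- Divergence of a vector field on `ℝ²`. -/
def divg (u : E2 → E2) (x : E2) : ℝ := ∑ i : Fin 2, pd i (fun y => u y i) x

/-- Laplacian of a scalar function on `ℝ²`. -/
def lap (f : E2 → ℝ) (x : E2) : ℝ := ∑ i : Fin 2, pd i (fun y => pd i f y) x

/-- `(u, ϱ)` solves the 2D viscous shallow water system (with viscosity `μ`)
`∂_t ϱ + div u + u·∇ϱ = −ϱ div u`,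
`∂_t u − μΔu − μ∇(div u) + u·∇u + ∇ϱ = 2∇(ln(1+ϱ))·𝔻u`
pointwise for times in `I`. -/
def IsSWESolution (μ : ℝ) (I : Set ℝ) (u : ℝ → E2 → E2) (ϱ : ℝ → E2 → ℝ) : Prop :=
  ∀ t ∈ I, ∀ x : E2,
    (deriv (fun τ => ϱ τ x) t + divg (u t) x + (∑ i : Fin 2, u t x i * pd i (ϱ t) x)
        = -(ϱ t x * divg (u t) x)) ∧
    ∀ j : Fin 2,
      deriv (fun τ => u τ x j) t - μ * lap (fun y => u t y j) x - μ * pd j (divg (u t)) x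
          + (∑ i : Fin 2, u t x i * pd i (fun y => u t y j) x) + pd j (ϱ t) x
        = ∑ i : Fin 2, pd i (fun y => Real.log (1 + ϱ t y)) x
            * (pd i (fun y => u t y j) x + pd j (fun y => u t y i) x)

/-- `(u, ϱ)` solves the linearized viscous shallow water system
`∂_t ϱ + div u = 0`, `∂_t u − μΔu − μ∇(div u) + ∇ϱ = 0`
pointwise for times in `I`. -/
def IsLinSWESolution (μ : ℝ) (I : Set ℝ) (u : ℝ → E2 → E2) (ϱ : ℝ → E2 → ℝ) : Prop :=
  ∀ t ∈ I, ∀ x : E2,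
    (deriv (fun τ => ϱ τ x) t + divg (u t) x = 0) ∧
    ∀ j : Fin 2,
      deriv (fun τ => u τ x j) t - μ * lap (fun y => u t y j) x - μ * pd j (divg (u t)) x
          + pd j (ϱ t) x = 0

/-- Continuity in time with values in `H^s`. -/
def ContInHs (s : ℝ) (I : Set ℝ) (f : ℝ → E2 → ℝ) : Prop :=
  ∀ t ∈ I, Tendsto (fun τ => hsNorm s fun x => f τ x - f t x) (nhdsWithin t I) (nhds 0)

/-- Continuity in time with values in `H^s`, vector-field version. -/
def ContInHsVec (s : ℝ) (I : Set ℝ) (u : ℝ → E2 → E2) : Prop :=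
  ∀ i : Fin 2, ContInHs s I fun t x => u t x i

/-- `L²` norm of a complex-valued function on `ℝ²`. -/
def l2NormC (h : E2 → ℂ) : ℝ := Real.sqrt (∫ x : E2, ‖h x‖ ^ 2)

/-- `L^∞` norm of a real-valued function on `ℝ²`. -/
def linfNorm (h : E2 → ℝ) : ℝ := (eLpNorm h ⊤ volume).toReal

/-- Inverse Fourier transform on `ℝ²` (for the above convention). -/
def invFt2 (F : E2 → ℂ) (x : E2) : ℂ :=
  (((2 * Real.pi) ^ 2 : ℝ) : ℂ)⁻¹ * ∫ ξ : E2, Complex.exp (Complex.I * (⟪x, ξ⟫ : ℂ)) * F ξ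

/-- `Λ^s = (−Δ)^{s/2}`: the Fourier multiplier with symbol `|ξ|^s`. -/
def lamPow (s : ℝ) (f : E2 → ℂ) : E2 → ℂ :=
  fun x => invFt2 (fun ξ => ((‖ξ‖ ^ s : ℝ) : ℂ) * ft2 f ξ) x

/-- Partial derivative `∂ᵢ` of a complex-valued function on `ℝ²`. -/
def pdC (i : Fin 2) (h : E2 → ℂ) (x : E2) : ℂ := fderiv ℝ h x (EuclideanSpace.single i 1)

/-- Fourier transform on `ℝ`, convention `f̂(ξ) = ∫ e^{-i x ξ} f(x) dx`. -/
def ft1 (f : ℝ → ℂ) (ξ : ℝ) : ℂ :=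
  ∫ x : ℝ, Complex.exp (-Complex.I * ((x * ξ : ℝ) : ℂ)) * f x

/-- The standing assumptions on the bump function `φ`: its Fourier transform is
even, real-valued, non-negative, equal to `1` on `{|ξ| ≤ 1/4}` and to `0` on `{|ξ| ≥ 1/2}`. -/
def GoodBump (φ : ℝ → ℝ) : Prop :=
  (∀ ξ : ℝ, (ft1 (fun x => (φ x : ℂ)) ξ).im = 0) ∧
  (∀ ξ : ℝ, 0 ≤ (ft1 (fun x => (φ x : ℂ)) ξ).re) ∧
  (∀ ξ : ℝ, ft1 (fun x => (φ x : ℂ)) (-ξ) = ft1 (fun x => (φ x : ℂ)) ξ) ∧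
  (∀ ξ : ℝ, |ξ| ≤ 1 / 4 → ft1 (fun x => (φ x : ℂ)) ξ = 1) ∧
  (∀ ξ : ℝ, 1 / 2 ≤ |ξ| → ft1 (fun x => (φ x : ℂ)) ξ = 0)

/-- `f_n(x) = 2^{-ns} φ(x₁) sin(2ⁿ x₁) φ(x₂)`. -/
def fSeq (s : ℝ) (φ : ℝ → ℝ) (n : ℕ) : E2 → ℝ := fun x =>
  (2 : ℝ) ^ (-(n : ℝ) * s) * (φ (x 0) * Real.sin ((2 : ℝ) ^ n * x 0) * φ (x 1))

/-- `g_n = 2^{-n} ∇(φ(x₁) φ(x₂))`. -/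
def gSeq (φ : ℝ → ℝ) (n : ℕ) : E2 → E2 := fun x =>
  (2 : ℝ) ^ (-(n : ℝ)) •
    (EuclideanSpace.equiv (Fin 2) ℝ).symm
      ![deriv φ (x 0) * φ (x 1), φ (x 0) * deriv φ (x 1)]

/-!
`f̃ₙ` is a tensor product, so its Fourier transform factors into the one-dimensional transforms
of `φ(x₁) sin(2ⁿx₁)` and of `φ(x₂)`. Multiplying by `sin(2ⁿx₁)` shifts `φ̂` by `±2ⁿ`, so at a
point `ξ` of the support `|ξ₂| ≤ 1/2` and `|ξ₁ ∓ 2ⁿ| ≤ 1/2` for one of the signs; this puts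
`‖ξ‖` within distance `1` of `2ⁿ`.
-/

section

open Complex

lemma ft2_prod (H : Fin 2 → ℝ → ℂ) (ξ : E2) :
    ft2 (fun x => ∏ i, H i (x i)) ξ = ∏ i, ft1 (H i) (ξ i) := by
  have hexp (x : E2) : exp (-I * (⟪x, ξ⟫ : ℂ)) = ∏ i, exp (-I * ((x i * ξ i : ℝ) : ℂ)) := by
    simp only [PiLp.inner_apply, RCLike.inner_apply, conj_trivial, ofReal_sum, Finset.mul_sum,
      exp_sum, mul_comm (ξ _)]
  simp_rw [ft2, ft1, hexp, ← Finset.prod_mul_distrib]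
  rw [← (PiLp.volume_preserving_toLp (Fin 2)).integral_comp
    (MeasurableEquiv.toLp 2 (Fin 2 → ℝ)).measurableEmbedding]
  exact integral_fintype_prod_volume_eq_prod (fun i t => exp (-I * ((t * ξ i : ℝ) : ℂ)) * H i t)

lemma ft2_mul_coord (F G : ℝ → ℂ) (ξ : E2) :
    ft2 (fun x => F (x 0) * G (x 1)) ξ = ft1 F (ξ 0) * ft1 G (ξ 1) := by
  simpa [Fin.prod_univ_two] using ft2_prod ![F, G] ξ

lemma integrable_ft1_integrand {f : ℝ → ℂ} (hf : Integrable f) (ξ : ℝ) :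
    Integrable (fun x => exp (-I * ((x * ξ : ℝ) : ℂ)) * f x) := by
  refine hf.bdd_mul (c := 1) (by fun_prop) (.of_forall fun x => ?_)
  rw [neg_mul, ← mul_neg, ← ofReal_neg, norm_exp_I_mul_ofReal]

lemma ft1_mul_sin {f : ℝ → ℂ} (hf : Integrable f) (a ξ : ℝ) :
    ft1 (fun x => f x * sin (a * x)) ξ = (ft1 f (ξ - a) - ft1 f (ξ + a)) / (2 * I) := by
  rw [ft1, ft1, ft1, ← integral_sub (integrable_ft1_integrand hf _)
    (integrable_ft1_integrand hf _), ← integral_div]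
  congr 1 with x
  have hsub :
      exp (-I * ((x * (ξ - a) : ℝ) : ℂ)) = exp (-I * ((x * ξ : ℝ) : ℂ)) * exp (a * x * I) := by
    rw [← exp_add]; push_cast; ring_nf
  have hadd :
      exp (-I * ((x * (ξ + a) : ℝ) : ℂ)) = exp (-I * ((x * ξ : ℝ) : ℂ)) * exp (-(a * x) * I) := by
    rw [← exp_add]; push_cast; ring_nf
  rw [hsub, hadd, sin]
  field_simp
  rw [I_sq]
  ring

end

lemma norm_mem_Icc_of_abs_coord_le {ξ : E2} {R r : ℝ} (hR : 0 ≤ R)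
    (h0 : |ξ 0 - R| ≤ r ∨ |ξ 0 + R| ≤ r) (h1 : |ξ 1| ≤ r) :
    ‖ξ‖ ∈ Set.Icc (R - 2 * r) (R + 2 * r) := by
  have hr : 0 ≤ r := (abs_nonneg _).trans h1
  have habs0 : R - r ≤ |ξ 0| ∧ |ξ 0| ≤ R + r := by
    rcases h0 with h | h <;> obtain ⟨_, _⟩ := abs_le.1 h <;> constructor <;>
      cases abs_cases (ξ 0) <;> linarith
  have hlo : |ξ 0| ≤ ‖ξ‖ := by simpa using PiLp.norm_apply_le ξ 0
  have hhi : ‖ξ‖ ≤ |ξ 0| + |ξ 1| := by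
    rw [EuclideanSpace.norm_eq, Fin.sum_univ_two, Real.sqrt_le_left (by positivity)]
    simp only [Real.norm_eq_abs]
    nlinarith [mul_nonneg (abs_nonneg (ξ 0)) (abs_nonneg (ξ 1))]
  constructor <;> linarith

theorem spectral_support_ftilde_general (φ : SchwartzMap ℝ ℝ)
    (hφ : ∀ ξ : ℝ, ξ ∉ Set.Icc (-(1 / 2) : ℝ) (1 / 2) → ft1 (fun x => (φ x : ℂ)) ξ = 0)
    (n : ℕ) :
    Function.support
        (ft2 fun x : E2 => ((φ (x 0) * Real.sin ((2 : ℝ) ^ n * x 0) * φ (x 1) : ℝ) : ℂ))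
      ⊆ {ξ : E2 | (2 : ℝ) ^ n - 1 ≤ ‖ξ‖ ∧ ‖ξ‖ ≤ (2 : ℝ) ^ n + 1} := by
  intro ξ hξ
  have hfac : ft2 (fun x : E2 => ((φ (x 0) * Real.sin ((2 : ℝ) ^ n * x 0) * φ (x 1) : ℝ) : ℂ)) ξ
      = (ft1 (fun x => (φ x : ℂ)) (ξ 0 - 2 ^ n) - ft1 (fun x => (φ x : ℂ)) (ξ 0 + 2 ^ n))
        / (2 * Complex.I) * ft1 (fun x => (φ x : ℂ)) (ξ 1) := by
    rw [← ft1_mul_sin (f := fun x => (φ x : ℂ)) φ.integrable.ofReal, ← ft2_mul_coord]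
    congr 1 with x
    push_cast
    ring
  rw [Function.mem_support, hfac, mul_ne_zero_iff] at hξ
  set Φ := ft1 fun x => (φ x : ℂ)
  have hΦ (η : ℝ) (h : Φ η ≠ 0) : |η| ≤ 1 / 2 := abs_le.2 (not_not.1 (mt (hφ η) h))
  obtain ⟨h0, h1⟩ := hξ
  have h0' : Φ (ξ 0 - 2 ^ n) ≠ 0 ∨ Φ (ξ 0 + 2 ^ n) ≠ 0 := by
    by_contra! h
    exact h0 (by rw [h.1, h.2, sub_zero, zero_div])
  obtain ⟨hlo, hhi⟩ :=
    norm_mem_Icc_of_abs_coord_le (by positivity) (h0'.imp (hΦ _) (hΦ _)) (hΦ _ h1)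
  exact ⟨by linarith, by linarith⟩

/-- **Spectral support of `f̃_n`**: if `φ` is a real-valued Schwartz function on `ℝ` whose
Fourier transform vanishes outside `[−1/2, 1/2]` and `n ≥ 1`, then the Fourier transform of
`f̃_n(x₁,x₂) = φ(x₁) sin(2ⁿx₁) φ(x₂)` is supported in the annulus
`C_n = {ξ : 2ⁿ − 1 ≤ |ξ| ≤ 2ⁿ + 1}`. -/
theorem spectral_support_ftilde (φ : SchwartzMap ℝ ℝ)
    (hφ : ∀ ξ : ℝ, ξ ∉ Set.Icc (-(1 / 2) : ℝ) (1 / 2) → ft1 (fun x => (φ x : ℂ)) ξ = 0)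
    (n : ℕ) (hn : 1 ≤ n) :
    Function.support
        (ft2 fun x : E2 => ((φ (x 0) * Real.sin ((2 : ℝ) ^ n * x 0) * φ (x 1) : ℝ) : ℂ))
      ⊆ {ξ : E2 | (2 : ℝ) ^ n - 1 ≤ ‖ξ‖ ∧ ‖ξ‖ ≤ (2 : ℝ) ^ n + 1} :=
  spectral_support_ftilde_general φ hφ n
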